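/- Let u : ℝ³ → ℝ³ be a Schwartz function. Then ‖∇u‖_{L³(ℝ³)} ≲ ‖∇u‖_{L²(ℝ³)}^{1/2} · ‖∇²u‖_{L²(ℝ³)}^{1/2}. -/

import Mathlib

/-!
Hölder's inequality interpolates `L³` between `L²` and `L⁶`:
`‖f‖₃ ≤ ‖f‖₂^{1/2} ‖f‖₆^{1/2}`. For `f = ∇u` the Gagliardo–Nirenberg–Sobolev inequality
`‖f‖₆ ≲ ‖∇f‖₂` on `ℝ³` bounds the second factor by `‖∇²u‖₂^{1/2}`. That inequality, available
for compactly supported `f`, extends to every `C¹` function in `Lᵖ` by truncating with rescaled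
bumps `χ(x/R)`, whose gradients are `O(1/R)`, and letting `R → ∞` with Fatou's lemma.
-/

open MeasureTheory Filter Topology
open scoped ENNReal NNReal

theorem eLpNorm_le_eLpNorm_rpow_mul_eLpNorm_rpow {α F : Type*} [MeasurableSpace α]
    [NormedAddCommGroup F] {μ : Measure α} {f : α → F} (hf : AEStronglyMeasurable f μ)
    {p q r : ℝ≥0∞} {θ : ℝ} (hθ₀ : 0 < θ) (hθ₁ : θ < 1)
    (hpqr : r⁻¹ = ENNReal.ofReal θ / p + ENNReal.ofReal (1 - θ) / q) :
    eLpNorm f r μ ≤ eLpNorm f p μ ^ θ * eLpNorm f q μ ^ (1 - θ) := by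
  have hθ₀' : ENNReal.ofReal θ ≠ 0 := by simpa using hθ₀
  have hθ₁' : ENNReal.ofReal (1 - θ) ≠ 0 := by simpa using hθ₁
  have : ENNReal.HolderTriple (p / ENNReal.ofReal θ) (q / ENNReal.ofReal (1 - θ)) r :=
    ⟨by rw [ENNReal.inv_div (by simp) (by simp [hθ₀']),
      ENNReal.inv_div (by simp) (by simp [hθ₁']), hpqr]⟩
  calc eLpNorm f r μ = eLpNorm (fun x => ‖f x‖ ^ θ * ‖f x‖ ^ (1 - θ)) r μ := by
        rw [← eLpNorm_norm f]
        congr with x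
        rw [← Real.rpow_add' (norm_nonneg _) (by simp), add_sub_cancel, Real.rpow_one]
    _ ≤ 1 * eLpNorm (fun x => ‖f x‖ ^ θ) (p / ENNReal.ofReal θ) μ *
          eLpNorm (fun x => ‖f x‖ ^ (1 - θ)) (q / ENNReal.ofReal (1 - θ)) μ :=
        eLpNorm_le_eLpNorm_mul_eLpNorm'_of_norm (by fun_prop (disch := linarith))
          (by fun_prop (disch := linarith)) (· * ·) 1 (ae_of_all _ fun x => by simp [norm_mul])
    _ = eLpNorm f p μ ^ θ * eLpNorm f q μ ^ (1 - θ) := by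
        rw [eLpNorm_norm_rpow _ hθ₀, eLpNorm_norm_rpow _ (sub_pos.2 hθ₁),
          ENNReal.div_mul_cancel hθ₀' ENNReal.ofReal_ne_top,
          ENNReal.div_mul_cancel hθ₁' ENNReal.ofReal_ne_top, one_mul]

theorem eLpNorm_three_le_eLpNorm_two_mul_eLpNorm_six {α F : Type*} [MeasurableSpace α]
    [NormedAddCommGroup F] {μ : Measure α} {f : α → F} (hf : AEStronglyMeasurable f μ) :
    eLpNorm f 3 μ ≤ eLpNorm f 2 μ ^ (1 / 2 : ℝ) * eLpNorm f 6 μ ^ (1 / 2 : ℝ) := by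
  have h := eLpNorm_le_eLpNorm_rpow_mul_eLpNorm_rpow hf (r := 3) (p := 2) (q := 6)
    (θ := 1 / 2) (by norm_num) (by norm_num) (by
      rw [← ENNReal.toReal_eq_toReal_iff' (by simp) (by simp [ENNReal.div_eq_top]),
        ENNReal.toReal_add (by simp [ENNReal.div_eq_top]) (by simp [ENNReal.div_eq_top])]
      norm_num [ENNReal.toReal_div])
  rwa [show (1 : ℝ) - 1 / 2 = 1 / 2 by norm_num] at h

section Cutoff

variable {E F : Type*} [NormedAddCommGroup E] [NormedSpace ℝ E]
  [NormedAddCommGroup F] [NormedSpace ℝ F]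

theorem ContDiffBump.exists_norm_fderiv_le [FiniteDimensional ℝ E] {c : E}
    (χ : ContDiffBump c) :
    ∃ K, ∀ x, ‖fderiv ℝ χ x‖ ≤ K :=
  (χ.hasCompactSupport.fderiv ℝ).exists_bound_of_continuous
    (χ.contDiff.continuous_fderiv one_ne_zero)

theorem norm_fderiv_smul_comp_smul_le {χ : E → ℝ} {v : E → F} {K : ℝ}
    (hχ : Differentiable ℝ χ) (hχ_le : ∀ y, ‖χ y‖ ≤ 1) (hK : ∀ y, ‖fderiv ℝ χ y‖ ≤ K)
    (c : ℝ) {x : E} (hv : DifferentiableAt ℝ v x) :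
    ‖fderiv ℝ (fun y => χ (c • y) • v y) x‖ ≤ ‖fderiv ℝ v x‖ + ‖c * K‖ * ‖v x‖ := by
  have hχc : DifferentiableAt ℝ (fun y => χ (c • y)) x :=
    (hχ _).comp x (differentiableAt_id.const_smul c)
  rw [fderiv_fun_smul hχc hv, fderiv_comp_smul (f := χ)]
  refine (norm_add_le _ _).trans (add_le_add ?_ ?_)
  · rw [norm_smul]
    exact mul_le_of_le_one_left (norm_nonneg _) (hχ_le _)
  · rw [ContinuousLinearMap.norm_smulRight_apply, norm_mul]
    gcongr
    rw [norm_smul]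
    gcongr
    exact (hK _).trans (le_abs_self K)

theorem eLpNorm_fderiv_smul_comp_smul_le [MeasurableSpace E] [OpensMeasurableSpace E]
    {μ : Measure E} {p : ℝ≥0∞} (hp : 1 ≤ p) {χ : E → ℝ} {v : E → F} {K : ℝ}
    (hχ : Differentiable ℝ χ) (hχ_le : ∀ y, ‖χ y‖ ≤ 1) (hK : ∀ y, ‖fderiv ℝ χ y‖ ≤ K)
    (c : ℝ) (hv : ContDiff ℝ 1 v) :
    eLpNorm (fderiv ℝ (fun y => χ (c • y) • v y)) p μ ≤
      eLpNorm (fderiv ℝ v) p μ + ‖c * K‖ₑ * eLpNorm v p μ := by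
  calc eLpNorm (fderiv ℝ (fun y => χ (c • y) • v y)) p μ
      ≤ eLpNorm (fun x => ‖fderiv ℝ v x‖ + ‖c * K‖ * ‖v x‖) p μ :=
        eLpNorm_mono_real fun x => norm_fderiv_smul_comp_smul_le hχ hχ_le hK c
          (hv.differentiable one_ne_zero x)
    _ ≤ eLpNorm (fun x => ‖fderiv ℝ v x‖) p μ + eLpNorm (fun x => ‖c * K‖ * ‖v x‖) p μ :=
        eLpNorm_add_le (hv.continuous_fderiv one_ne_zero).norm.aestronglyMeasurable
          (continuous_const.mul hv.continuous.norm).aestronglyMeasurable hp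
    _ = eLpNorm (fderiv ℝ v) p μ + ‖c * K‖ₑ * eLpNorm v p μ := by
        rw [eLpNorm_norm, ← eLpNorm_norm v, ← enorm_norm (c * K)]
        exact congrArg _ (eLpNorm_const_smul ‖c * K‖ (fun x => ‖v x‖) p μ)

theorem ContDiffBump.norm_le_one [HasContDiffBump E] {c : E} (χ : ContDiffBump c) (x : E) :
    ‖χ x‖ ≤ 1 := by
  rw [Real.norm_of_nonneg χ.nonneg]
  exact χ.le_one

theorem ContDiffBump.tendsto_smul_of_tendsto_zero [HasContDiffBump E] {ι : Type*}
    {l : Filter ι} (χ : ContDiffBump (0 : E)) {c : ι → ℝ} (hc : Tendsto c l (𝓝 0))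
    (v : E → F) (x : E) :
    Tendsto (fun n => χ (c n • x) • v x) l (𝓝 (v x)) := by
  have hχ : Tendsto (fun n => χ (c n • x)) l (𝓝 1) := by
    have := (χ.continuous.tendsto _).comp (hc.smul_const x)
    rwa [zero_smul, χ.one_of_mem_closedBall (Metric.mem_closedBall_self χ.rIn_pos.le)] at this
  simpa using hχ.smul_const (v x)

open Module in
theorem eLpNorm_le_eLpNorm_fderiv_of_eq_of_eLpNorm_ne_top [FiniteDimensional ℝ E]
    [MeasurableSpace E] [BorelSpace E] (μ : Measure E) [μ.IsAddHaarMeasure]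
    [FiniteDimensional ℝ F] {v : E → F} (hv : ContDiff ℝ 1 v) {p p' : ℝ≥0}
    (hvp : eLpNorm v p μ ≠ ∞) (hp : 1 ≤ p)
    (hn : 0 < finrank ℝ E) (hp' : (p' : ℝ)⁻¹ = p⁻¹ - (finrank ℝ E : ℝ)⁻¹) :
    eLpNorm v p' μ ≤ SNormLESNormFDerivOfEqConst F μ p * eLpNorm (fderiv ℝ v) p μ := by
  let χ : ContDiffBump (0 : E) := ⟨1, 2, one_pos, one_lt_two⟩
  obtain ⟨K, hK⟩ := χ.exists_norm_fderiv_le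
  let c : ℕ → ℝ := fun n => 1 / ((n : ℝ) + 1)
  have hc : Tendsto c atTop (𝓝 0) := tendsto_one_div_add_atTop_nhds_zero_nat
  let C := (SNormLESNormFDerivOfEqConst F μ p : ℝ≥0∞)
  let w : ℕ → E → F := fun n y => χ (c n • y) • v y
  have hw : ∀ n, eLpNorm (w n) p' μ ≤
      C * (eLpNorm (fderiv ℝ v) p μ + ‖c n * K‖ₑ * eLpNorm v p μ) := by
    intro n
    have hcn : c n ≠ 0 := one_div_ne_zero n.cast_add_one_ne_zero
    have hw_diff : ContDiff ℝ 1 (w n) := (χ.contDiff.comp (contDiff_const_smul _)).smul hv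
    have hw_supp : HasCompactSupport (w n) := (χ.hasCompactSupport.comp_smul hcn).smul_right
    calc eLpNorm (w n) p' μ ≤ C * eLpNorm (fderiv ℝ (w n)) p μ :=
          eLpNorm_le_eLpNorm_fderiv_of_eq μ hw_diff hw_supp hp hn hp'
      _ ≤ _ := by
          gcongr
          exact eLpNorm_fderiv_smul_comp_smul_le (by exact_mod_cast hp)
            (χ.contDiff.differentiable one_ne_zero) χ.norm_le_one hK _ hv
  have hlim : Tendsto (fun n => C * (eLpNorm (fderiv ℝ v) p μ + ‖c n * K‖ₑ * eLpNorm v p μ))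
      atTop (𝓝 (C * eLpNorm (fderiv ℝ v) p μ)) := by
    have hcK : Tendsto (fun n => ‖c n * K‖ₑ) atTop (𝓝 0) := by
      have := (continuous_enorm.tendsto _).comp (hc.mul_const K)
      rwa [zero_mul, enorm_zero] at this
    simpa using ENNReal.Tendsto.const_mul
      (tendsto_const_nhds.add (ENNReal.Tendsto.mul_const hcK (Or.inr hvp)))
      (Or.inr ENNReal.coe_ne_top)
  calc eLpNorm v p' μ ≤ atTop.liminf fun n => eLpNorm (w n) p' μ :=
        Lp.eLpNorm_lim_le_liminf_eLpNorm
          (fun n => ((χ.continuous.comp (continuous_const_smul _)).smul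
            hv.continuous).aestronglyMeasurable)
          v (ae_of_all _ (χ.tendsto_smul_of_tendsto_zero hc v))
    _ ≤ atTop.liminf fun n => C * (eLpNorm (fderiv ℝ v) p μ + ‖c n * K‖ₑ * eLpNorm v p μ) :=
        liminf_le_liminf (Eventually.of_forall hw)
    _ = C * eLpNorm (fderiv ℝ v) p μ := hlim.liminf_eq

end Cutoff

section IteratedFDeriv

variable {𝕜 E F : Type*} [NontriviallyNormedField 𝕜] [NormedAddCommGroup E] [NormedSpace 𝕜 E]
  [NormedAddCommGroup F] [NormedSpace 𝕜 F] [MeasurableSpace E] (f : E → F) (p : ℝ≥0∞)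
  (μ : Measure E)

theorem eLpNorm_iteratedFDeriv_one :
    eLpNorm (iteratedFDeriv 𝕜 1 f) p μ = eLpNorm (fderiv 𝕜 f) p μ :=
  eLpNorm_congr_norm_ae (ae_of_all _ fun _ => norm_iteratedFDeriv_one f)

theorem eLpNorm_iteratedFDeriv_two :
    eLpNorm (iteratedFDeriv 𝕜 2 f) p μ = eLpNorm (fderiv 𝕜 (fderiv 𝕜 f)) p μ := by
  rw [← eLpNorm_norm (iteratedFDeriv 𝕜 2 f), ← eLpNorm_norm (fderiv 𝕜 (fderiv 𝕜 f))]
  congr 1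
  funext x
  rw [← norm_iteratedFDeriv_one (𝕜 := 𝕜), norm_iteratedFDeriv_fderiv]

end IteratedFDeriv

/-- Interpolation inequality: for Schwartz `u : ℝ³ → ℝ³`,
`‖∇u‖_{L³} ≲ ‖∇u‖_{L²}^{1/2} ‖∇²u‖_{L²}^{1/2}` with an absolute constant. -/
theorem gagliardo_nirenberg_L3 :
    ∃ C : ℝ, 0 < C ∧
      ∀ u : SchwartzMap (EuclideanSpace ℝ (Fin 3)) (EuclideanSpace ℝ (Fin 3)),
        eLpNorm (iteratedFDeriv ℝ 1 (fun x => u x)) 3 volume ≤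
          ENNReal.ofReal C *
            eLpNorm (iteratedFDeriv ℝ 1 (fun x => u x)) 2 volume ^ ((1:ℝ)/2) *
            eLpNorm (iteratedFDeriv ℝ 2 (fun x => u x)) 2 volume ^ ((1:ℝ)/2) := by
  let E := EuclideanSpace ℝ (Fin 3)
  let C₀ : ℝ≥0 := SNormLESNormFDerivOfEqConst (E →L[ℝ] E) (volume : Measure E) 2
  refine ⟨C₀ ^ (1 / 2 : ℝ) + 1, by positivity, fun u => ?_⟩
  let g := SchwartzMap.fderivCLM ℝ E E u
  have hsob : eLpNorm g (6 : ℝ≥0) volume ≤ C₀ * eLpNorm (fderiv ℝ g) (2 : ℝ≥0) volume :=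
    eLpNorm_le_eLpNorm_fderiv_of_eq_of_eLpNorm_ne_top volume (g.smooth 1)
      (g.eLpNorm_lt_top _ volume).ne one_le_two (by simp [E]) (by norm_num [E])
  have hC₀ : (C₀ : ℝ≥0∞) ^ (1 / 2 : ℝ) ≤ ENNReal.ofReal (C₀ ^ (1 / 2 : ℝ) + 1) := by
    rw [← ENNReal.ofReal_coe_nnreal, ENNReal.ofReal_rpow_of_nonneg C₀.coe_nonneg (by norm_num)]
    exact ENNReal.ofReal_le_ofReal (le_add_of_nonneg_right zero_le_one)
  rw [eLpNorm_iteratedFDeriv_one, eLpNorm_iteratedFDeriv_one, eLpNorm_iteratedFDeriv_two]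
  change eLpNorm g 3 volume ≤ ENNReal.ofReal _ * eLpNorm g 2 volume ^ _ *
    eLpNorm (fderiv ℝ g) 2 volume ^ _
  calc eLpNorm g 3 volume
      ≤ eLpNorm g 2 volume ^ (1 / 2 : ℝ) * eLpNorm g 6 volume ^ (1 / 2 : ℝ) :=
        eLpNorm_three_le_eLpNorm_two_mul_eLpNorm_six g.continuous.aestronglyMeasurable
    _ ≤ eLpNorm g 2 volume ^ (1 / 2 : ℝ) *
          ((C₀ : ℝ≥0∞) * eLpNorm (fderiv ℝ g) 2 volume) ^ (1 / 2 : ℝ) := by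
        gcongr
        exact_mod_cast hsob
    _ = (C₀ : ℝ≥0∞) ^ (1 / 2 : ℝ) * eLpNorm g 2 volume ^ (1 / 2 : ℝ) *
          eLpNorm (fderiv ℝ g) 2 volume ^ (1 / 2 : ℝ) := by
        rw [ENNReal.mul_rpow_of_nonneg _ _ (by norm_num)]
        ring
    _ ≤ _ := by gcongr
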